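/- arXiv:1608.05432 — 3 statements merged into one kernel-verified Lean document; each statement's English description precedes it below -/
import Mathlib

section
/- Let X, Y be sets and let R ⊆ R' ⊆ X × Y be nonempty relations, with associated Dowker complexes E_R ⊆ E_{R'} (on vertex set X) and F_R ⊆ F_{R'} (on vertex set Y). Then there exist homotopy equivalences Γ : |F_R| → |E_R| and Γ' : |F_{R'}| → |E_{R'}| such that |ι_E| ∘ Γ is homotopic to Γ' ∘ |ι_F|, where ι_E : E_R ↪ E_{R'} and ι_F : F_R ↪ F_{R'} are the canonical inclusions. -/
/-!
Pick witnesses `a τ ∈ X` for the simplices `τ` of `F_R` and `b σ ∈ Y` for those of `E_R`.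
Sending the barycenter of `τ` to the vertex `a τ` is a simplicial map `Sd F_R → E_R`; composed
with the homeomorphism `|F_R| ≅ |Sd F_R|` it gives `Γ : |F_R| → |E_R|`, and `b` gives `Δ` back.
Up to the barycentric homeomorphisms, `Δ ∘ Γ` is the simplicial map `C ↦ b (a C)` on the second
subdivision, which is contiguous, through `C ↦ min C`, to the double barycentric map, hence
homotopic to the identity; exchanging the roles of `X` and `Y` handles `Γ ∘ Δ`. Choosing the
witnesses for `R'` to extend those for `R` makes the square with the inclusions commute exactly.
-/

/-- The closed geometric simplex on the finite vertex set `σ`, inside `V → ℝ`. -/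
def simplexSet {V : Type*} (σ : Finset V) : Set (V → ℝ) :=
  {f | (∀ v, v ∉ σ → f v = 0) ∧ (∀ v, 0 ≤ f v) ∧ ∑ v ∈ σ, f v = 1}

/-- The underlying set of the geometric realization of `K`. -/
def realizationSet {V : Type*} (K : Set (Finset V)) : Set (V → ℝ) :=
  {f | ∃ σ ∈ K, f ∈ simplexSet σ}

/-- The geometric realization of the simplicial complex `K`. -/
def Realization {V : Type*} (K : Set (Finset V)) : Type _ := realizationSet K

/-- The geometric realization carries the weak topology: the final topology determined
by the family of closed simplices. -/
instance realizationTopology {V : Type*} (K : Set (Finset V)) :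
    TopologicalSpace (Realization K) :=
  ⨆ σ : {σ : Finset V // σ ∈ K},
    TopologicalSpace.coinduced
      (fun f : simplexSet σ.1 => (⟨f.1, σ.1, σ.2, f.2⟩ : Realization K))
      inferInstance

lemma realization_mono {V : Type*} {K L : Set (Finset V)} (h : K ⊆ L) :
    realizationSet K ⊆ realizationSet L := fun _ ⟨σ, hσ, hf⟩ => ⟨σ, h hσ, hf⟩

/-- The continuous inclusion of geometric realizations induced by an inclusion of
simplicial complexes. -/
noncomputable def inclusionMap {V : Type*} {K L : Set (Finset V)} (h : K ⊆ L) :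
    C(Realization K, Realization L) where
  toFun := fun p => ⟨p.1, realization_mono h p.2⟩
  continuous_toFun := by
    refine continuous_iSup_dom.mpr fun σ => ?_
    refine continuous_coinduced_dom.mpr ?_
    refine continuous_iff_coinduced_le.mpr ?_
    exact le_iSup (fun τ : {σ : Finset V // σ ∈ L} =>
      TopologicalSpace.coinduced
        (fun f : simplexSet τ.1 => (⟨f.1, τ.1, τ.2, f.2⟩ : Realization L))
        inferInstance) ⟨σ.1, h σ.2⟩

/-- The Dowker complex `E_R` of a relation `R ⊆ X × Y`. -/
def dowkerE {X Y : Type*} (R : Set (X × Y)) : Set (Finset X) :=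
  {σ | σ.Nonempty ∧ ∃ y : Y, ∀ x ∈ σ, (x, y) ∈ R}

/-- The Dowker complex `F_R` of a relation `R ⊆ X × Y`. -/
def dowkerF {X Y : Type*} (R : Set (X × Y)) : Set (Finset Y) :=
  {τ | τ.Nonempty ∧ ∃ x : X, ∀ y ∈ τ, (x, y) ∈ R}

lemma dowkerE_mono {X Y : Type*} {R R' : Set (X × Y)} (h : R ⊆ R') :
    dowkerE R ⊆ dowkerE R' := by
  rintro σ ⟨hne, y, hy⟩
  exact ⟨hne, y, fun x hx => h (hy x hx)⟩

lemma dowkerF_mono {X Y : Type*} {R R' : Set (X × Y)} (h : R ⊆ R') :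
    dowkerF R ⊆ dowkerF R' := by
  rintro τ ⟨hne, x, hx⟩
  exact ⟨hne, x, fun y hy => h (hx y hy)⟩

open Finset Function

section SimplexSet

variable {V : Type*}

lemma isClosed_simplexSet (σ : Finset V) : IsClosed (simplexSet σ) := by
  simp only [simplexSet, Set.ofPred_and, Set.ofPred_forall]
  exact (isClosed_iInter fun v => isClosed_iInter fun _ =>
      isClosed_eq (continuous_apply v) continuous_const).inter
    ((isClosed_iInter fun v => isClosed_le continuous_const (continuous_apply v)).inter
      (isClosed_eq (continuous_finsetSum _ fun v _ => continuous_apply v) continuous_const))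

lemma isCompact_simplexSet (σ : Finset V) : IsCompact (simplexSet σ) := by
  refine (isCompact_univ_pi fun _ => isCompact_Icc (a := (0 : ℝ)) (b := 1)).of_isClosed_subset
    (isClosed_simplexSet σ) ?_
  rintro f ⟨h0, hpos, hsum⟩ v -
  refine ⟨hpos v, ?_⟩
  by_cases hv : v ∈ σ
  · exact hsum ▸ single_le_sum (fun w _ => hpos w) hv
  · simp [h0 v hv]

lemma simplexSet_mono {σ τ : Finset V} (h : σ ⊆ τ) :
    simplexSet σ ⊆ simplexSet τ := by
  rintro f ⟨h0, hpos, hsum⟩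
  exact ⟨fun v hv => h0 v fun hvσ => hv (h hvσ), hpos,
    hsum ▸ (sum_subset h fun v _ hv => h0 v hv).symm⟩

lemma convex_simplexSet (σ : Finset V) : Convex ℝ (simplexSet σ) := by
  rintro f ⟨hf0, hfpos, hfsum⟩ g ⟨hg0, hgpos, hgsum⟩ a b ha hb hab
  refine ⟨fun v hv => by simp [hf0 v hv, hg0 v hv], fun v => ?_, ?_⟩
  · simp only [Pi.add_apply, Pi.smul_apply, smul_eq_mul]
    exact add_nonneg (mul_nonneg ha (hfpos v)) (mul_nonneg hb (hgpos v))
  · simp [sum_add_distrib, ← mul_sum, hfsum, hgsum, hab]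

lemma single_mem_simplexSet [DecidableEq V] (v : V) :
    Pi.single v 1 ∈ simplexSet {v} :=
  ⟨fun w hw => by simp [mem_singleton.not.mp hw],
    fun w => by simp only [Pi.single_apply]; split <;> norm_num, by simp⟩

end SimplexSet

namespace Realization

variable {V : Type*} {K : Set (Finset V)}

def ofSimplex {σ : Finset V} (hσ : σ ∈ K) : simplexSet σ → Realization K :=
  fun f => ⟨f.1, σ, hσ, f.2⟩

lemma continuous_ofSimplex {σ : Finset V} (hσ : σ ∈ K) : Continuous (ofSimplex hσ) :=
  continuous_iSup_rng (i := ⟨σ, hσ⟩) continuous_coinduced_rng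

lemma continuous_of_forall_simplex {Z : Type*} [TopologicalSpace Z] {f : Realization K → Z}
    (h : ∀ σ (hσ : σ ∈ K), Continuous (f ∘ ofSimplex hσ)) : Continuous f :=
  continuous_iSup_dom.mpr fun σ => continuous_coinduced_dom.mpr (h σ.1 σ.2)

lemma continuous_val : Continuous (fun p : Realization K => (p.1 : V → ℝ)) :=
  continuous_of_forall_simplex fun _ _ => continuous_subtype_val

instance : T2Space (Realization K) :=
  .of_injective_continuous Subtype.val_injective continuous_val

/-- Continuity on `I × |K|` can be tested simplexwise since `I` is locally compact. -/
lemma continuous_prod_of_forall_simplex {Z : Type*} [TopologicalSpace Z]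
    {f : unitInterval × Realization K → Z}
    (h : ∀ σ (hσ : σ ∈ K), Continuous fun x : unitInterval × simplexSet σ =>
      f (x.1, ofSimplex hσ x.2)) : Continuous f := by
  have hslice (p : Realization K) : Continuous fun t => f (t, p) := by
    obtain ⟨σ, hσ, hp⟩ := p.2
    exact (h σ hσ).comp (Continuous.prodMk_left (⟨p.1, hp⟩ : simplexSet σ))
  let G : Realization K → C(unitInterval, Z) := fun p => ⟨fun t => f (t, p), hslice p⟩
  have hG : Continuous G := continuous_of_forall_simplex fun σ hσ =>
    (ContinuousMap.curry ⟨fun x : simplexSet σ × unitInterval => f (x.2, ofSimplex hσ x.1),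
      (h σ hσ).comp continuous_swap⟩).continuous
  exact continuous_eval.comp ((hG.comp continuous_snd).prodMk continuous_fst)

lemma compactSpace_of_finite (hK : K.Finite) : CompactSpace (Realization K) := by
  have : Finite K := hK
  have huniv : ⋃ σ : K, Set.range (ofSimplex σ.2) = Set.univ :=
    Set.eq_univ_of_forall fun p => by
      obtain ⟨σ, hσ, hp⟩ := p.2
      exact Set.mem_iUnion.mpr ⟨⟨σ, hσ⟩, ⟨p.1, hp⟩, rfl⟩
  refine ⟨huniv ▸ isCompact_iUnion fun σ => ?_⟩
  have := isCompact_iff_compactSpace.mp (isCompact_simplexSet σ.1)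
  exact isCompact_range (continuous_ofSimplex σ.2)

end Realization

section Affine

variable {V W U : Type*}

/-- Maps between realizations are encoded by the images `q v` of the vertices; `p` holds the
barycentric coordinates of a point. -/
noncomputable def affineExt (q : V → W → ℝ) (p : V → ℝ) : W → ℝ :=
  fun w => ∑ᶠ v, p v * q v w

variable {q : V → W → ℝ} {p : V → ℝ} {σ : Finset V}

lemma affineExt_eq_sum (hp : ∀ v ∉ σ, p v = 0) (w : W) :
    affineExt q p w = ∑ v ∈ σ, p v * q v w :=
  finsum_eq_sum_of_support_subset _ fun v hv =>
    by_contra fun hvσ => hv (by simp [hp v hvσ])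

lemma affineExt_congr {q' : V → W → ℝ} (h : ∀ v, p v ≠ 0 → q v = q' v) :
    affineExt q p = affineExt q' p :=
  funext fun w => finsum_congr fun v => by
    by_cases hv : p v = 0
    · simp [hv]
    · rw [h v hv]

lemma affineExt_single [DecidableEq V] (q : V → W → ℝ) (v : V) :
    affineExt q (Pi.single v 1) = q v :=
  funext fun w => by
    rw [affineExt_eq_sum (σ := {v}) (single_mem_simplexSet v).1]
    simp

lemma affineExt_add_smul {p' : V → ℝ} (hp : ∀ v ∉ σ, p v = 0) (hp' : ∀ v ∉ σ, p' v = 0)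
    (a b : ℝ) : affineExt q (a • p + b • p') = a • affineExt q p + b • affineExt q p' := by
  funext w
  have hpp' : ∀ v ∉ σ, (a • p + b • p') v = 0 := fun v hv => by simp [hp v hv, hp' v hv]
  simp only [affineExt_eq_sum hpp', affineExt_eq_sum hp, affineExt_eq_sum hp', Pi.add_apply,
    Pi.smul_apply, smul_eq_mul, mul_sum, ← sum_add_distrib]
  exact sum_congr rfl fun v _ => by ring

lemma affineExt_mem {ρ : Finset W} (hp : p ∈ simplexSet σ)
    (hq : ∀ v ∈ σ, q v ∈ simplexSet ρ) : affineExt q p ∈ simplexSet ρ := by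
  obtain ⟨h0, hpos, hsum⟩ := hp
  refine ⟨fun w hw => ?_, fun w => ?_, ?_⟩
  · rw [affineExt_eq_sum h0]
    exact sum_eq_zero fun v hv => by rw [(hq v hv).1 w hw, mul_zero]
  · rw [affineExt_eq_sum h0]
    exact sum_nonneg fun v hv => mul_nonneg (hpos v) ((hq v hv).2.1 w)
  · simp_rw [affineExt_eq_sum h0]
    rw [sum_comm, ← hsum]
    exact sum_congr rfl fun v hv => by rw [← mul_sum, (hq v hv).2.2, mul_one]

lemma affineExt_affineExt {q' : W → U → ℝ} {ρ : Finset W} (hp : ∀ v ∉ σ, p v = 0)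
    (hq : ∀ v ∈ σ, q v ∈ simplexSet ρ) :
    affineExt q' (affineExt q p) = affineExt (fun v => affineExt q' (q v)) p := by
  funext u
  have hqp : ∀ w ∉ ρ, affineExt q p w = 0 := fun w hw => by
    rw [affineExt_eq_sum hp]
    exact sum_eq_zero fun v hv => by rw [(hq v hv).1 w hw, mul_zero]
  simp_rw [affineExt_eq_sum hqp, affineExt_eq_sum hp, sum_mul]
  rw [sum_comm]
  refine sum_congr rfl fun v hv => ?_
  rw [affineExt_eq_sum (hq v hv).1, mul_sum]
  exact sum_congr rfl fun w _ => by ring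

lemma continuous_affineExt (q : V → W → ℝ) (σ : Finset V) :
    Continuous fun f : simplexSet σ => affineExt q f.1 := by
  refine continuous_pi fun w => ?_
  have (f : simplexSet σ) : affineExt q f.1 w = ∑ v ∈ σ, f.1 v * q v w :=
    affineExt_eq_sum f.2.1 w
  simp_rw [this]
  exact continuous_finsetSum σ fun v _ =>
    ((continuous_apply v).comp continuous_subtype_val).mul continuous_const

end Affine

section AffineMap

variable {V W U : Type*} {K : Set (Finset V)} {L : Set (Finset W)} {M : Set (Finset U)}

def MapsSimplices (K : Set (Finset V)) (L : Set (Finset W)) (q : V → W → ℝ) : Prop :=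
  ∀ σ ∈ K, ∃ ρ ∈ L, ∀ v ∈ σ, q v ∈ simplexSet ρ

def Contiguous (K : Set (Finset V)) (L : Set (Finset W)) (q q' : V → W → ℝ) : Prop :=
  ∀ σ ∈ K, ∃ ρ ∈ L, ∀ v ∈ σ, q v ∈ simplexSet ρ ∧ q' v ∈ simplexSet ρ

lemma Contiguous.mapsSimplices_left {q q' : V → W → ℝ} (h : Contiguous K L q q') :
    MapsSimplices K L q :=
  fun σ hσ => (h σ hσ).imp fun _ hρ => ⟨hρ.1, fun v hv => (hρ.2 v hv).1⟩

lemma Contiguous.mapsSimplices_right {q q' : V → W → ℝ} (h : Contiguous K L q q') :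
    MapsSimplices K L q' :=
  fun σ hσ => (h σ hσ).imp fun _ hρ => ⟨hρ.1, fun v hv => (hρ.2 v hv).2⟩

lemma MapsSimplices.comp {q : V → W → ℝ} {q' : W → U → ℝ} (hq : MapsSimplices K L q)
    (hq' : MapsSimplices L M q') : MapsSimplices K M fun v => affineExt q' (q v) := by
  intro σ hσ
  obtain ⟨ρ, hρ, hσρ⟩ := hq σ hσ
  obtain ⟨π, hπ, hρπ⟩ := hq' ρ hρ
  exact ⟨π, hπ, fun v hv => affineExt_mem (hσρ v hv) hρπ⟩

lemma MapsSimplices.affineExt_mem_realizationSet {q : V → W → ℝ} (hq : MapsSimplices K L q)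
    (p : Realization K) : affineExt q p.1 ∈ realizationSet L := by
  obtain ⟨σ, hσ, hp⟩ := p.2
  obtain ⟨ρ, hρ, hσρ⟩ := hq σ hσ
  exact ⟨ρ, hρ, affineExt_mem hp hσρ⟩

noncomputable def affineMap (q : V → W → ℝ) (hq : MapsSimplices K L q) :
    C(Realization K, Realization L) where
  toFun p := ⟨affineExt q p.1, hq.affineExt_mem_realizationSet p⟩
  continuous_toFun := Realization.continuous_of_forall_simplex fun σ hσ => by
    obtain ⟨ρ, hρ, hσρ⟩ := hq σ hσ
    exact (Realization.continuous_ofSimplex hρ).comp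
      ((continuous_affineExt q σ).subtype_mk fun f => affineExt_mem f.2 hσρ)

@[simp] lemma affineMap_apply_val (q : V → W → ℝ) (hq : MapsSimplices K L q)
    (p : Realization K) : (affineMap q hq p).1 = affineExt q p.1 := rfl

lemma affineMap_comp {q : V → W → ℝ} {q' : W → U → ℝ} (hq : MapsSimplices K L q)
    (hq' : MapsSimplices L M q') :
    (affineMap q' hq').comp (affineMap q hq) = affineMap _ (hq.comp hq') := by
  ext1 p
  obtain ⟨σ, hσ, hp⟩ := p.2
  obtain ⟨ρ, -, hσρ⟩ := hq σ hσ
  exact Subtype.ext (affineExt_affineExt hp.1 hσρ)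

/-- Contiguous affine maps are homotopic through the straight-line homotopy, which stays inside
a simplex because simplices are convex. -/
lemma affineMap_homotopic {q q' : V → W → ℝ} (h : Contiguous K L q q') :
    (affineMap q h.mapsSimplices_left).Homotopic (affineMap q' h.mapsSimplices_right) := by
  have hmem {ρ : Finset W} {f : V → ℝ} {s : Finset V} (hf : f ∈ simplexSet s)
      (hsρ : ∀ v ∈ s, q v ∈ simplexSet ρ ∧ q' v ∈ simplexSet ρ) (t : unitInterval) :
      (1 - t.1) • affineExt q f + t.1 • affineExt q' f ∈ simplexSet ρ :=
    convex_simplexSet ρ (affineExt_mem hf fun v hv => (hsρ v hv).1)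
      (affineExt_mem hf fun v hv => (hsρ v hv).2) (by linarith [t.2.2]) t.2.1 (by ring)
  let H : unitInterval × Realization K → Realization L := fun x =>
    ⟨(1 - x.1.1) • affineExt q x.2.1 + x.1.1 • affineExt q' x.2.1, by
      obtain ⟨σ, hσ, hp⟩ := x.2.2
      obtain ⟨ρ, hρ, hσρ⟩ := h σ hσ
      exact ⟨ρ, hρ, hmem hp hσρ x.1⟩⟩
  have hH : Continuous H := Realization.continuous_prod_of_forall_simplex fun σ hσ => by
    obtain ⟨ρ, hρ, hσρ⟩ := h σ hσ
    have hval : Continuous fun x : unitInterval × simplexSet σ => x.1.1 :=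
      continuous_subtype_val.comp continuous_fst
    have hc : Continuous fun x : unitInterval × simplexSet σ =>
        (1 - x.1.1) • affineExt q x.2.1 + x.1.1 • affineExt q' x.2.1 :=
      ((continuous_const.sub hval).smul ((continuous_affineExt q σ).comp continuous_snd)).add
        (hval.smul ((continuous_affineExt q' σ).comp continuous_snd))
    exact (Realization.continuous_ofSimplex hρ).comp (hc.subtype_mk fun x => hmem x.2.2 hσρ x.1)
  exact ⟨⟨⟨H, hH⟩, fun p => Subtype.ext (by simp [H]), fun p => Subtype.ext (by simp [H])⟩⟩

end AffineMap

section Simplicial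

variable {V W U : Type*} [DecidableEq W] [DecidableEq U]
  {K : Set (Finset V)} {L : Set (Finset W)} {M : Set (Finset U)}

lemma mapsSimplices_single {f : V → W} (hf : ∀ σ ∈ K, σ.image f ∈ L) :
    MapsSimplices K L fun v => Pi.single (f v) 1 :=
  fun σ hσ => ⟨σ.image f, hf σ hσ, fun _ hv =>
    simplexSet_mono (singleton_subset_iff.mpr (mem_image_of_mem f hv)) (single_mem_simplexSet _)⟩

noncomputable def simplicialMap (f : V → W) (hf : ∀ σ ∈ K, σ.image f ∈ L) :
    C(Realization K, Realization L) :=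
  affineMap _ (mapsSimplices_single hf)

lemma simplicialMap_comp {f : V → W} {g : W → U} (hf : ∀ σ ∈ K, σ.image f ∈ L)
    (hg : ∀ ρ ∈ L, ρ.image g ∈ M) :
    (simplicialMap g hg).comp (simplicialMap f hf) =
      simplicialMap (g ∘ f) fun σ hσ => by rw [← image_image]; exact hg _ (hf σ hσ) := by
  rw [simplicialMap, simplicialMap, affineMap_comp]
  congr 1
  exact funext fun v => affineExt_single _ _

end Simplicial

section Subdivision

variable {V W : Type*}

structure IsSimplicialComplex (K : Set (Finset V)) : Prop where
  nonempty_of_mem : ∀ {σ}, σ ∈ K → σ.Nonempty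
  mem_of_subset : ∀ {σ τ}, σ ∈ K → τ ⊆ σ → τ.Nonempty → τ ∈ K

def subdivision (K : Set (Finset V)) : Set (Finset (Finset V)) :=
  {C | C.Nonempty ∧ ↑C ⊆ K ∧ IsChain (· ⊆ ·) (C : Set (Finset V))}

variable {K : Set (Finset V)} {L : Set (Finset W)} {C : Finset (Finset V)}

lemma isSimplicialComplex_subdivision (K : Set (Finset V)) :
    IsSimplicialComplex (subdivision K) where
  nonempty_of_mem hC := hC.1
  mem_of_subset hC hDC hD := ⟨hD, (coe_subset.mpr hDC).trans hC.2.1, hC.2.2.mono hDC⟩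

lemma subdivision_mono {K' : Set (Finset V)} (h : K ⊆ K') : subdivision K ⊆ subdivision K' :=
  fun _ hC => ⟨hC.1, hC.2.1.trans h, hC.2.2⟩

def faces (σ : Finset V) : Set (Finset V) := {τ | τ.Nonempty ∧ τ ⊆ σ}

lemma isSimplicialComplex_faces (σ : Finset V) : IsSimplicialComplex (faces σ) where
  nonempty_of_mem hτ := hτ.1
  mem_of_subset hτ hρτ hρ := ⟨hρ, hρτ.trans hτ.2⟩

lemma finite_subdivision_faces (σ : Finset V) : (subdivision (faces σ)).Finite :=
  σ.powerset.powerset.finite_toSet.subset fun _ hC =>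
    mem_powerset.mpr fun _ hτ => mem_powerset.mpr (hC.2.1 hτ).2

lemma image_mem_subdivision [DecidableEq V] [DecidableEq W] {f : V → W}
    (hf : ∀ σ ∈ K, σ.image f ∈ L) (hC : C ∈ subdivision K) :
    C.image (image f) ∈ subdivision L := by
  refine ⟨hC.1.image _, ?_, ?_⟩
  · simp only [coe_image, Set.image_subset_iff]
    exact fun σ hσ => hf σ (hC.2.1 hσ)
  · rw [coe_image]
    exact hC.2.2.image_of_map_rel _ _ _ fun _ _ h => image_subset_image h

variable [DecidableEq V]

lemma IsChain.sup_id_mem (hC : IsChain (· ⊆ ·) (C : Set (Finset V))) (hne : C.Nonempty) :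
    C.sup id ∈ C := by
  rw [← sup'_eq_sup hne]
  refine sup'_mem _ (fun σ hσ τ hτ => ?_) C hne id fun _ h => h
  rcases hC.total hσ hτ with h | h
  · rwa [sup_of_le_right h]
  · rwa [sup_of_le_left h]

lemma sup_id_mem_of_mem_subdivision (hC : C ∈ subdivision K) : C.sup id ∈ K :=
  hC.2.1 (hC.2.2.sup_id_mem hC.1)

/-- The smallest simplex of a chain; `∅` for the empty chain. -/
def chainMin (C : Finset (Finset V)) : Finset V :=
  if h : C.Nonempty then C.inf' h id else ∅

lemma chainMin_subset {τ : Finset V} (hτ : τ ∈ C) : chainMin C ⊆ τ := by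
  rw [chainMin, dif_pos ⟨τ, hτ⟩]
  exact inf'_le id hτ

lemma chainMin_mem (hC : C ∈ subdivision K) : chainMin C ∈ C := by
  rw [chainMin, dif_pos hC.1]
  refine inf'_mem _ (fun σ hσ τ hτ => ?_) C hC.1 id fun _ h => h
  rcases hC.2.2.total hσ hτ with h | h
  · rwa [inf_of_le_left h]
  · rwa [inf_of_le_right h]

noncomputable def barycenter (τ : Finset V) : V → ℝ :=
  fun v => if v ∈ τ then (#τ : ℝ)⁻¹ else 0

lemma barycenter_mem_simplexSet {τ : Finset V} (hτ : τ.Nonempty) :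
    barycenter τ ∈ simplexSet τ := by
  refine ⟨fun v hv => if_neg hv, fun v => ?_, ?_⟩
  · unfold barycenter; split <;> positivity
  · have : ∀ v ∈ τ, barycenter τ v = (#τ : ℝ)⁻¹ := fun v hv => if_pos hv
    rw [sum_congr rfl this, sum_const, nsmul_eq_mul]
    exact mul_inv_cancel₀ (Nat.cast_ne_zero.mpr hτ.card_pos.ne')

lemma mapsSimplices_barycenter (hK : IsSimplicialComplex K) :
    MapsSimplices (subdivision K) K barycenter :=
  fun _ hC => ⟨_, sup_id_mem_of_mem_subdivision hC, fun _ hτ =>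
    simplexSet_mono (le_sup (f := id) hτ)
      (barycenter_mem_simplexSet (hK.nonempty_of_mem (hC.2.1 hτ)))⟩

noncomputable def baryMap (hK : IsSimplicialComplex K) :
    C(Realization (subdivision K), Realization K) :=
  affineMap barycenter (mapsSimplices_barycenter hK)

end Subdivision

section Barycentric

variable {V : Type*} [DecidableEq V] {K : Set (Finset V)}

lemma eq_barycenter_of_forall_eq {s : Finset V} {f : V → ℝ} {c : ℝ} (hf : f ∈ simplexSet s)
    (hc : ∀ v ∈ s, f v = c) : f = barycenter s := by
  have hcard : (#s : ℝ) * c = 1 := by rw [← hf.2.2, sum_congr rfl hc, sum_const, nsmul_eq_mul]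
  funext v
  by_cases hv : v ∈ s
  · rw [hc v hv, barycenter, if_pos hv, eq_inv_of_mul_eq_one_right hcard]
  · rw [hf.1 v hv, barycenter, if_neg hv]

lemma smul_barycenter_apply (s : Finset V) (m : ℝ) (v : V) :
    (((#s : ℝ) * m) • barycenter s) v = if v ∈ s then m else 0 := by
  simp only [Pi.smul_apply, smul_eq_mul, barycenter]
  split_ifs with hv
  · field_simp [Nat.cast_ne_zero.mpr (card_pos.mpr ⟨v, hv⟩).ne']
  · exact mul_zero _

/-- `t = #s * min f` is the largest weight of the barycenter of `s` leaving a nonnegative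
remainder. -/
lemma exists_eq_smul_barycenter_add {s : Finset V} {f : V → ℝ} (hf : f ∈ simplexSet s)
    (hne : s.Nonempty) (hs' : (s.filter (s.inf' hne f < f ·)).Nonempty) :
    ∃ t : ℝ, 0 ≤ t ∧ t < 1 ∧ ∃ f' ∈ simplexSet (s.filter (s.inf' hne f < f ·)),
      f = t • barycenter s + (1 - t) • f' := by
  set m := s.inf' hne f
  set t := (#s : ℝ) * m
  have hm : ∀ v ∈ s, m ≤ f v := fun v hv => inf'_le f hv
  have hm0 : 0 ≤ m := le_inf' hne f fun v _ => hf.2.1 v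
  have ht1 : t < 1 := by
    obtain ⟨v₁, hv₁⟩ := hs'
    rw [mem_filter] at hv₁
    calc t = ∑ _v ∈ s, m := by simp [t]
      _ < ∑ v ∈ s, f v := sum_lt_sum hm ⟨v₁, hv₁.1, hv₁.2⟩
      _ = 1 := hf.2.2
  set d := f - t • barycenter s
  have hd : ∀ v ∉ s.filter (m < f ·), d v = 0 := fun v hv => by
    simp only [d, Pi.sub_apply, t, smul_barycenter_apply]
    by_cases hvs : v ∈ s
    · simp only [mem_filter, hvs, true_and, not_lt] at hv
      rw [if_pos hvs, le_antisymm hv (hm v hvs), sub_self]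
    · rw [if_neg hvs, hf.1 v hvs, sub_zero]
  have hd0 : ∀ v, 0 ≤ d v := fun v => by
    simp only [d, Pi.sub_apply, t, smul_barycenter_apply]
    split_ifs with hvs
    · exact sub_nonneg.mpr (hm v hvs)
    · simpa using hf.2.1 v
  have hdsum : ∑ v ∈ s.filter (m < f ·), d v = 1 - t := by
    rw [sum_subset (filter_subset _ s) fun v _ hv => hd v hv]
    simp only [d, Pi.sub_apply, sum_sub_distrib, hf.2.2, Pi.smul_apply, smul_eq_mul, ← mul_sum,
      (barycenter_mem_simplexSet hne).2.2, mul_one]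
  have h1t : (1 : ℝ) - t ≠ 0 := by linarith
  refine ⟨t, by positivity, ht1, (1 - t)⁻¹ • d,
    ⟨fun v hv => by simp [hd v hv], fun v => ?_, ?_⟩, ?_⟩
  · exact mul_nonneg (inv_nonneg.mpr (by linarith)) (hd0 v)
  · simp only [Pi.smul_apply, smul_eq_mul, ← mul_sum, hdsum, inv_mul_cancel₀ h1t]
  · rw [smul_smul, mul_inv_cancel₀ h1t, one_smul, add_sub_cancel]

lemma insert_mem_subdivision {s : Finset V} {C : Finset (Finset V)} (hs : s ∈ K)
    (hC : C ∈ subdivision K) (hCs : ∀ τ ∈ C, τ ⊆ s) : insert s C ∈ subdivision K := by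
  refine ⟨insert_nonempty s C, ?_, ?_⟩
  · rw [coe_insert]
    exact Set.insert_subset hs hC.2.1
  · rw [coe_insert]
    exact hC.2.2.insert fun τ hτ _ => Or.inr (hCs τ hτ)

lemma exists_affineExt_barycenter_eq (hK : IsSimplicialComplex K) {s : Finset V} (hs : s ∈ K)
    {f : V → ℝ} (hf : f ∈ simplexSet s) :
    ∃ C ∈ subdivision K, (∀ τ ∈ C, τ ⊆ s) ∧ ∃ g ∈ simplexSet C, affineExt barycenter g = f := by
  induction s using Finset.strongInduction generalizing f with
  | H s ih =>
  have hne := hK.nonempty_of_mem hs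
  by_cases hs' : (s.filter (s.inf' hne f < f ·)).Nonempty
  · obtain ⟨v₀, hv₀, hv₀min⟩ := exists_mem_eq_inf' hne f
    have hsub : s.filter (s.inf' hne f < f ·) ⊂ s :=
      filter_ssubset.mpr ⟨v₀, hv₀, by rw [hv₀min]; exact lt_irrefl _⟩
    obtain ⟨t, ht0, ht1, f', hf', rfl⟩ := exists_eq_smul_barycenter_add hf hne hs'
    obtain ⟨C, hC, hCs, g, hg, rfl⟩ :=
      ih _ hsub (hK.mem_of_subset hs hsub.subset hs') hf'
    have hs₁ : Pi.single s 1 ∈ simplexSet (insert s C) :=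
      simplexSet_mono (singleton_subset_iff.mpr (mem_insert_self s C)) (single_mem_simplexSet s)
    have hg₁ : g ∈ simplexSet (insert s C) := simplexSet_mono (subset_insert s C) hg
    refine ⟨insert s C, insert_mem_subdivision hs hC fun τ hτ => (hCs τ hτ).trans hsub.subset,
      fun τ hτ => ?_, t • Pi.single s 1 + (1 - t) • g,
      convex_simplexSet _ hs₁ hg₁ ht0 (by linarith) (by ring), ?_⟩
    · rcases mem_insert.mp hτ with rfl | hτ
      · exact subset_rfl
      · exact (hCs τ hτ).trans hsub.subset
    · rw [affineExt_add_smul hs₁.1 hg₁.1, affineExt_single]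
  · have hconst : ∀ v ∈ s, f v = s.inf' hne f := fun v hv =>
      le_antisymm (not_lt.mp fun h => hs' ⟨v, mem_filter.mpr ⟨hv, h⟩⟩) (inf'_le f hv)
    refine ⟨{s}, ⟨singleton_nonempty s, by simpa using hs, by simp⟩, by simp,
      Pi.single s 1, single_mem_simplexSet s, ?_⟩
    rw [affineExt_single, eq_barycenter_of_forall_eq hf hconst]

end Barycentric

section Injective

variable {V : Type*} [DecidableEq V]

lemma affineExt_eq_add_update {W : Type*} {q : V → W → ℝ} {p : V → ℝ} {σ : Finset V}
    (hp : ∀ v ∉ σ, p v = 0) (x : V) :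
    affineExt q p = p x • q x + affineExt q (update p x 0) := by
  have hp' : ∀ v ∉ insert x σ, p v = 0 := fun v hv => hp v fun h => hv (mem_insert_of_mem h)
  have hu : ∀ v ∉ insert x σ, update p x 0 v = 0 := fun v hv => by
    rw [update_of_ne (fun h : v = x => hv (h ▸ mem_insert_self x σ)), hp' v hv]
  funext w
  rw [Pi.add_apply, affineExt_eq_sum hp', affineExt_eq_sum hu,
    ← add_sum_erase _ _ (mem_insert_self x σ), ← add_sum_erase _ _ (mem_insert_self x σ),
    update_self, zero_mul, zero_add, Pi.smul_apply, smul_eq_mul]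
  exact congrArg _ (sum_congr rfl fun v hv => by rw [update_of_ne (ne_of_mem_erase hv)])

lemma barycenter_nonneg (τ : Finset V) (v : V) : 0 ≤ barycenter τ v := by
  unfold barycenter; split <;> positivity

lemma barycenter_pos {τ : Finset V} {v : V} (hv : v ∈ τ) : 0 < barycenter τ v := by
  rw [barycenter, if_pos hv]
  exact inv_pos.mpr (Nat.cast_pos.mpr (card_pos.mpr ⟨v, hv⟩))

structure IsPosChain (S : Finset (Finset V)) (g : Finset V → ℝ) : Prop where
  eq_zero : ∀ τ ∉ S, g τ = 0
  pos : ∀ τ ∈ S, 0 < g τ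
  isChain : IsChain (· ⊆ ·) (S : Set (Finset V))
  nonempty : ∀ τ ∈ S, τ.Nonempty

namespace IsPosChain

variable {S : Finset (Finset V)} {g : Finset V → ℝ}

lemma affineExt_barycenter_nonneg (h : IsPosChain S g) (v : V) :
    0 ≤ affineExt barycenter g v := by
  rw [affineExt_eq_sum h.eq_zero]
  exact sum_nonneg fun τ hτ => mul_nonneg (h.pos τ hτ).le (barycenter_nonneg τ v)

lemma affineExt_barycenter_pos_iff (h : IsPosChain S g) (v : V) :
    0 < affineExt barycenter g v ↔ v ∈ S.sup id := by
  rw [affineExt_eq_sum h.eq_zero, mem_sup]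
  constructor
  · intro hpos
    by_contra! hv
    exact hpos.ne' (sum_eq_zero fun τ hτ => by
      rw [barycenter, if_neg (show v ∉ τ from hv τ hτ), mul_zero])
  · rintro ⟨τ, hτ, hvτ⟩
    exact sum_pos' (fun σ hσ => mul_nonneg (h.pos σ hσ).le (barycenter_nonneg σ v))
      ⟨τ, hτ, mul_pos (h.pos τ hτ) (barycenter_pos hvτ)⟩

lemma erase_sup (h : IsPosChain S g) :
    IsPosChain (S.erase (S.sup id)) (update g (S.sup id) 0) where
  eq_zero τ hτ := by
    by_cases hτS : τ = S.sup id
    · rw [hτS, update_self]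
    · rw [update_of_ne hτS, h.eq_zero τ fun h => hτ (mem_erase.mpr ⟨hτS, h⟩)]
  pos τ hτ := by
    rw [update_of_ne (ne_of_mem_erase hτ)]
    exact h.pos τ (mem_of_mem_erase hτ)
  isChain := h.isChain.mono (coe_subset.mpr (erase_subset _ S))
  nonempty τ hτ := h.nonempty τ (mem_of_mem_erase hτ)

lemma eq_empty_iff (h : IsPosChain S g) : S = ∅ ↔ S.sup id = ∅ := by
  refine ⟨fun hS => hS ▸ sup_empty, fun hM => eq_empty_of_forall_notMem fun τ hτ => ?_⟩
  exact (h.nonempty τ hτ).ne_empty (subset_empty.mp (hM ▸ le_sup (f := id) hτ))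

lemma sup_erase_ssubset (h : IsPosChain S g) (hne : S.Nonempty) :
    (S.erase (S.sup id)).sup id ⊂ S.sup id := by
  have hM := h.isChain.sup_id_mem hne
  refine ssubset_of_subset_of_ne (sup_mono (erase_subset _ S)) fun heq => ?_
  rcases (S.erase (S.sup id)).eq_empty_or_nonempty with hE | hE
  · rw [hE, sup_empty] at heq
    exact (h.nonempty _ hM).ne_empty heq.symm
  · exact (mem_erase.mp (heq ▸ h.erase_sup.isChain.sup_id_mem hE)).1 rfl

lemma isLeast (h : IsPosChain S g) (hne : S.Nonempty) :
    IsLeast (affineExt barycenter g '' ↑(S.sup id)) (g (S.sup id) / #(S.sup id)) := by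
  have hsplit (v : V) (hv : v ∈ S.sup id) : affineExt barycenter g v =
      g (S.sup id) / #(S.sup id) + affineExt barycenter (update g (S.sup id) 0) v := by
    rw [affineExt_eq_add_update h.eq_zero (S.sup id), Pi.add_apply, Pi.smul_apply, smul_eq_mul,
      barycenter, if_pos hv, div_eq_mul_inv]
  obtain ⟨v, hvM, hv⟩ := exists_of_ssubset (h.sup_erase_ssubset hne)
  refine ⟨⟨v, hvM, ?_⟩, ?_⟩
  · rw [hsplit v hvM, add_eq_left]
    exact le_antisymm
      (not_lt.mp fun hlt => hv ((h.erase_sup.affineExt_barycenter_pos_iff v).mp hlt))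
      (h.erase_sup.affineExt_barycenter_nonneg v)
  · rintro _ ⟨w, hw, rfl⟩
    rw [hsplit w hw]
    exact le_add_of_nonneg_right (h.erase_sup.affineExt_barycenter_nonneg w)

/-- The support of the image determines the largest simplex of the chain and `isLeast` its
weight; then recurse on the rest of the chain. -/
lemma eq_of_affineExt_barycenter_eq {S₂ : Finset (Finset V)} {g₂ : Finset V → ℝ}
    (h₁ : IsPosChain S g) (h₂ : IsPosChain S₂ g₂)
    (heq : affineExt barycenter g = affineExt barycenter g₂) : g = g₂ := by
  induction S using Finset.strongInduction generalizing S₂ g g₂ with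
  | H S ih =>
  have hsup : S.sup id = S₂.sup id := ext fun v => by
    rw [← h₁.affineExt_barycenter_pos_iff, ← h₂.affineExt_barycenter_pos_iff, heq]
  have hS₂ : S₂ = ∅ ↔ S = ∅ := by rw [h₁.eq_empty_iff, h₂.eq_empty_iff, hsup]
  rcases S.eq_empty_or_nonempty with rfl | hne
  · funext τ
    rw [h₁.eq_zero τ (notMem_empty τ), h₂.eq_zero τ (hS₂.mpr rfl ▸ notMem_empty τ)]
  have hne₂ : S₂.Nonempty := nonempty_iff_ne_empty.mpr (hS₂.not.mpr hne.ne_empty)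
  set M := S.sup id
  have hM : M ∈ S := h₁.isChain.sup_id_mem hne
  have htop : g M = g₂ M := by
    have hleast := h₂.isLeast hne₂
    rw [← hsup, ← heq] at hleast
    have hcard : (#M : ℝ) ≠ 0 := Nat.cast_ne_zero.mpr (h₁.nonempty M hM).card_pos.ne'
    exact (div_left_inj' hcard).mp ((h₁.isLeast hne).unique hleast)
  have hrest : update g M 0 = update g₂ M 0 := by
    refine ih _ (erase_ssubset hM) h₁.erase_sup (hsup ▸ h₂.erase_sup) ?_
    have hsplit := (affineExt_eq_add_update h₁.eq_zero M).symm.trans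
      (heq.trans (affineExt_eq_add_update h₂.eq_zero M))
    rw [htop] at hsplit
    exact add_left_cancel hsplit
  funext τ
  by_cases hτ : τ = M
  · rw [hτ, htop]
  · simpa [update_of_ne hτ] using congrFun hrest τ

end IsPosChain

end Injective

section BaryHomeo

variable {V : Type*} [DecidableEq V] {K L : Set (Finset V)}

lemma isPosChain_filter (hK : IsSimplicialComplex K) {C : Finset (Finset V)}
    (hC : C ∈ subdivision K) {g : Finset V → ℝ} (hg : g ∈ simplexSet C) :
    IsPosChain (C.filter (0 < g ·)) g where
  eq_zero τ hτ := by
    by_cases hτC : τ ∈ C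
    · exact le_antisymm (not_lt.mp fun h => hτ (mem_filter.mpr ⟨hτC, h⟩)) (hg.2.1 τ)
    · exact hg.1 τ hτC
  pos _ hτ := (mem_filter.mp hτ).2
  isChain := hC.2.2.mono (coe_subset.mpr (filter_subset _ C))
  nonempty _ hτ := hK.nonempty_of_mem (hC.2.1 (mem_filter.mp hτ).1)

lemma baryMap_injective (hK : IsSimplicialComplex K) : Injective (baryMap hK) := by
  intro p₁ p₂ h
  obtain ⟨C₁, hC₁, hp₁⟩ := p₁.2
  obtain ⟨C₂, hC₂, hp₂⟩ := p₂.2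
  exact Subtype.ext ((isPosChain_filter hK hC₁ hp₁).eq_of_affineExt_barycenter_eq
    (isPosChain_filter hK hC₂ hp₂) (congrArg Subtype.val h))

lemma baryMap_surjective (hK : IsSimplicialComplex K) : Surjective (baryMap hK) := by
  intro p
  obtain ⟨σ, hσ, hp⟩ := p.2
  obtain ⟨C, hC, -, g, hg, hgp⟩ := exists_affineExt_barycenter_eq hK hσ hp
  exact ⟨⟨g, C, hC, hg⟩, Subtype.ext hgp⟩

noncomputable def baryEquiv (hK : IsSimplicialComplex K) :
    Realization (subdivision K) ≃ Realization K :=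
  .ofBijective _ ⟨baryMap_injective hK, baryMap_surjective hK⟩

lemma baryEquiv_symm_inclusionMap (hK : IsSimplicialComplex K) (hL : IsSimplicialComplex L)
    (h : K ⊆ L) (p : Realization K) :
    (baryEquiv hL).symm (inclusionMap h p) =
      inclusionMap (subdivision_mono h) ((baryEquiv hK).symm p) := by
  rw [Equiv.symm_apply_eq]
  exact Subtype.ext (congrArg Subtype.val ((baryEquiv hK).apply_symm_apply p)).symm

/-- On the finite complex of faces of `σ` the barycentric map is a continuous bijection from a
compact space to a Hausdorff one; this gives continuity of the inverse on each simplex. -/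
lemma continuous_baryEquiv_symm (hK : IsSimplicialComplex K) :
    Continuous (baryEquiv hK).symm := by
  refine Realization.continuous_of_forall_simplex fun σ hσ => ?_
  have hF := isSimplicialComplex_faces σ
  have hFK : faces σ ⊆ K := fun τ hτ => hK.mem_of_subset hσ hτ.2 hτ.1
  have hσF : σ ∈ faces σ := ⟨hK.nonempty_of_mem hσ, subset_rfl⟩
  have := Realization.compactSpace_of_finite (finite_subdivision_faces σ)
  let e := (baryMap hF).continuous.homeoOfEquivCompactToT2 (f := baryEquiv hF)
  refine ((inclusionMap (subdivision_mono hFK)).continuous.comp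
    (e.symm.continuous.comp (Realization.continuous_ofSimplex hσF))).congr fun f => ?_
  exact (baryEquiv_symm_inclusionMap hF hK hFK (Realization.ofSimplex hσF f)).symm

noncomputable def baryHomeo (hK : IsSimplicialComplex K) :
    Realization (subdivision K) ≃ₜ Realization K where
  toEquiv := baryEquiv hK
  continuous_toFun := (baryMap hK).continuous
  continuous_invFun := continuous_baryEquiv_symm hK

lemma coe_baryHomeo (hK : IsSimplicialComplex K) : (baryHomeo hK : C(_, _)) = baryMap hK := rfl

end BaryHomeo

lemma ContinuousMap.Homotopic.comp_homeomorph_symm {X X' Y Y' : Type*} [TopologicalSpace X]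
    [TopologicalSpace X'] [TopologicalSpace Y] [TopologicalSpace Y'] (e : X ≃ₜ X') (e' : Y ≃ₜ Y')
    {f : C(X, Y)} {g : C(X', Y')} (h : ((e' : C(Y, Y')).comp f).Homotopic (g.comp e)) :
    (f.comp (e.symm : C(X', X))).Homotopic ((e'.symm : C(Y', Y)).comp g) := by
  convert (ContinuousMap.Homotopic.refl (e'.symm : C(Y', Y))).comp
    (h.comp (ContinuousMap.Homotopic.refl (e.symm : C(X', X)))) using 1 <;> ext <;> simp

section Naturality

variable {V W : Type*} [DecidableEq V] [DecidableEq W] {K : Set (Finset V)} {L : Set (Finset W)}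

lemma contiguous_barycenter_image (hK : IsSimplicialComplex K) {f : V → W}
    (hf : ∀ σ ∈ K, σ.image f ∈ L) :
    Contiguous (subdivision K) L (fun τ => barycenter (τ.image f))
      (fun τ => affineExt (fun v => Pi.single (f v) 1) (barycenter τ)) := by
  intro S hS
  refine ⟨(S.sup id).image f, hf _ (sup_id_mem_of_mem_subdivision hS), fun τ hτ => ?_⟩
  have hτne := hK.nonempty_of_mem (hS.2.1 hτ)
  have hsub : τ.image f ⊆ (S.sup id).image f := image_subset_image (le_sup (f := id) hτ)
  exact ⟨simplexSet_mono hsub (barycenter_mem_simplexSet (hτne.image f)),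
    simplexSet_mono hsub (affineExt_mem (barycenter_mem_simplexSet hτne) fun v hv =>
      simplexSet_mono (singleton_subset_iff.mpr (mem_image_of_mem f hv))
        (single_mem_simplexSet _))⟩

lemma baryHomeo_comp_simplicialMap_homotopic (hK : IsSimplicialComplex K)
    (hL : IsSimplicialComplex L) {f : V → W} (hf : ∀ σ ∈ K, σ.image f ∈ L) :
    ((baryHomeo hL : C(_, _)).comp
      (simplicialMap (image f) fun _ hC => image_mem_subdivision hf hC)).Homotopic
      ((simplicialMap f hf).comp (baryHomeo hK)) := by
  rw [coe_baryHomeo, coe_baryHomeo, baryMap, baryMap, simplicialMap, simplicialMap,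
    affineMap_comp, affineMap_comp]
  convert affineMap_homotopic (contiguous_barycenter_image hK hf) using 2
  exact funext fun τ => affineExt_single _ _

end Naturality

lemma contiguous_chainMin_barycenter {V : Type*} [DecidableEq V] {K : Set (Finset V)}
    (hK : IsSimplicialComplex K) :
    Contiguous (subdivision (subdivision K)) K (fun C => barycenter (chainMin C))
      (fun C => affineExt barycenter (barycenter C)) := by
  intro S hS
  refine ⟨(S.sup id).sup id,
    sup_id_mem_of_mem_subdivision (sup_id_mem_of_mem_subdivision hS), fun C hC => ?_⟩
  have hCK : C ∈ subdivision K := hS.2.1 hC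
  have hCmax : C.sup id ⊆ (S.sup id).sup id := sup_mono (le_sup (f := id) hC)
  refine ⟨simplexSet_mono ((chainMin_subset (hCK.2.2.sup_id_mem hCK.1)).trans hCmax)
    (barycenter_mem_simplexSet (hK.nonempty_of_mem (hCK.2.1 (chainMin_mem hCK)))),
    simplexSet_mono hCmax (affineExt_mem (barycenter_mem_simplexSet hCK.1) fun τ hτ => ?_)⟩
  exact simplexSet_mono (le_sup (f := id) hτ)
    (barycenter_mem_simplexSet (hK.nonempty_of_mem (hCK.2.1 hτ)))

section SdMap

variable {V W : Type*} [DecidableEq V] [DecidableEq W] {K : Set (Finset V)} {L : Set (Finset W)}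

noncomputable def sdMap (hK : IsSimplicialComplex K) (a : Finset V → W)
    (ha : ∀ C ∈ subdivision K, C.image a ∈ L) : C(Realization K, Realization L) :=
  (simplicialMap a ha).comp ((baryHomeo hK).symm : C(_, _))

/-- Up to the barycentric homeomorphisms the composite is the simplicial map `C ↦ b (a C)` on
`Sd Sd K`, which is contiguous through `C ↦ chainMin C` to the double barycentric map. -/
theorem sdMap_comp_sdMap_homotopic_id (hK : IsSimplicialComplex K) (hL : IsSimplicialComplex L)
    {a : Finset V → W} {b : Finset W → V} {ha : ∀ C ∈ subdivision K, C.image a ∈ L}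
    {hb : ∀ D ∈ subdivision L, D.image b ∈ K}
    (hab : Contiguous (subdivision (subdivision K)) K (fun C => Pi.single (b (C.image a)) 1)
      (fun C => barycenter (chainMin C))) :
    ((sdMap hL b hb).comp (sdMap hK a ha)).Homotopic (ContinuousMap.id _) := by
  have hSK := isSimplicialComplex_subdivision K
  have hnat := (baryHomeo_comp_simplicialMap_homotopic hSK hL ha).comp_homeomorph_symm
    (baryHomeo hSK) (baryHomeo hL)
  have hχ : ((simplicialMap b hb).comp (simplicialMap (image a) fun _ hC =>
      image_mem_subdivision ha hC)).Homotopic ((baryHomeo hSK).trans (baryHomeo hK)) := by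
    rw [simplicialMap_comp, Homeomorph.coe_trans, coe_baryHomeo, coe_baryHomeo, baryMap,
      baryMap, affineMap_comp]
    exact (affineMap_homotopic hab).trans
      (affineMap_homotopic (contiguous_chainMin_barycenter hK))
  have h₁ := ((ContinuousMap.Homotopic.refl (simplicialMap b hb)).comp hnat.symm).comp
    (.refl ((baryHomeo hK).symm : C(Realization K, Realization (subdivision K))))
  have h₂ := hχ.comp (.refl (((baryHomeo hSK).trans (baryHomeo hK)).symm :
    C(Realization K, Realization (subdivision (subdivision K)))))
  rw [Homeomorph.toContinuousMap_comp_symm] at h₂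
  exact h₁.trans h₂

lemma inclusionMap_comp_sdMap {K' : Set (Finset V)} {L' : Set (Finset W)}
    (hK : IsSimplicialComplex K) (hK' : IsSimplicialComplex K') (hKK' : K ⊆ K') (hLL' : L ⊆ L')
    {a a' : Finset V → W} (ha : ∀ C ∈ subdivision K, C.image a ∈ L)
    (ha' : ∀ C ∈ subdivision K', C.image a' ∈ L') (haa' : ∀ τ ∈ K, a' τ = a τ) :
    (inclusionMap hLL').comp (sdMap hK a ha) = (sdMap hK' a' ha').comp (inclusionMap hKK') := by
  ext1 p
  refine Subtype.ext ?_
  change affineExt _ ((baryEquiv hK).symm p).1 =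
    affineExt _ ((baryEquiv hK').symm (inclusionMap hKK' p)).1
  rw [baryEquiv_symm_inclusionMap hK hK' hKK']
  obtain ⟨C, hC, hg⟩ := ((baryEquiv hK).symm p).2
  refine affineExt_congr fun τ hτ => ?_
  rw [haa' τ (hC.2.1 (not_imp_comm.mp (hg.1 τ) hτ))]

end SdMap

section Dowker

variable {X Y : Type*}

def IsDowkerWitness (R : Set (X × Y)) (a : Finset Y → X) : Prop :=
  ∀ τ ∈ dowkerF R, ∀ y ∈ τ, (a τ, y) ∈ R

open Classical in
noncomputable def dowkerWitness (R : Set (X × Y)) (a₀ : Finset Y → X) : Finset Y → X :=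
  fun τ => if h : ∃ x, ∀ y ∈ τ, (x, y) ∈ R then h.choose else a₀ τ

lemma isDowkerWitness_dowkerWitness (R : Set (X × Y)) (a₀ : Finset Y → X) :
    IsDowkerWitness R (dowkerWitness R a₀) := fun τ hτ => by
  rw [dowkerWitness, dif_pos hτ.2]
  exact hτ.2.choose_spec

lemma isDowkerWitness_dowkerWitness_of_subset {R R' : Set (X × Y)} (hRR' : R ⊆ R')
    {a₀ : Finset Y → X} (ha₀ : IsDowkerWitness R' a₀) : IsDowkerWitness R' (dowkerWitness R a₀) := fun τ hτ => by
  unfold dowkerWitness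
  split_ifs with h
  exacts [fun y hy => hRR' (h.choose_spec y hy), ha₀ τ hτ]

lemma dowkerWitness_eq_of_mem {R : Set (X × Y)} {τ : Finset Y} (hτ : τ ∈ dowkerF R)
    (a₀ a₁ : Finset Y → X) : dowkerWitness R a₀ τ = dowkerWitness R a₁ τ := by
  simp only [dowkerWitness, dif_pos hτ.2]

lemma isSimplicialComplex_dowkerF (R : Set (X × Y)) : IsSimplicialComplex (dowkerF R) where
  nonempty_of_mem hτ := hτ.1
  mem_of_subset hτ hρτ hρ := ⟨hρ, hτ.2.imp fun _ hx y hy => hx y (hρτ hy)⟩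

lemma isSimplicialComplex_dowkerE (R : Set (X × Y)) : IsSimplicialComplex (dowkerE R) :=
  isSimplicialComplex_dowkerF (Prod.swap ⁻¹' R)

variable [DecidableEq X] [DecidableEq Y] {R : Set (X × Y)} {a : Finset Y → X}

lemma image_mem_dowkerE (ha : IsDowkerWitness R a) {C : Finset (Finset Y)}
    (hC : C ∈ subdivision (dowkerF R)) : C.image a ∈ dowkerE R := by
  obtain ⟨y, hy⟩ := (hC.2.1 (chainMin_mem hC)).1
  refine ⟨hC.1.image a, y, ?_⟩
  simp only [mem_image]
  rintro _ ⟨τ, hτ, rfl⟩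
  exact ha τ (hC.2.1 hτ) y (chainMin_subset hτ hy)

noncomputable def dowkerMap (R : Set (X × Y)) (a : Finset Y → X) (ha : IsDowkerWitness R a) :
    C(Realization (dowkerF R), Realization (dowkerE R)) :=
  sdMap (isSimplicialComplex_dowkerF R) a fun _ hC => image_mem_dowkerE ha hC

/-- The common simplex is witnessed by `a T` for a simplex `T` lying in every chain of `S`. -/
lemma contiguous_witness_chainMin (ha : IsDowkerWitness R a) {b : Finset X → Y}
    (hb : IsDowkerWitness (Prod.swap ⁻¹' R) b) :
    Contiguous (subdivision (subdivision (dowkerF R))) (dowkerF R)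
      (fun C => Pi.single (b (C.image a)) 1) (fun C => barycenter (chainMin C)) := by
  intro S hS
  have hS₀ : chainMin S ∈ subdivision (dowkerF R) := hS.2.1 (chainMin_mem hS)
  set T := chainMin (chainMin S)
  have hT : T ∈ dowkerF R := hS₀.2.1 (chainMin_mem hS₀)
  have hTC : ∀ C ∈ S, T ∈ C := fun C hC => chainMin_subset hC (chainMin_mem hS₀)
  refine ⟨S.image (fun C => b (C.image a)) ∪ T, ⟨hT.1.mono subset_union_right, a T, ?_⟩,
    fun C hC => ⟨?_, ?_⟩⟩
  · intro y hy
    rcases mem_union.mp hy with hy | hy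
    · obtain ⟨C, hC, rfl⟩ := mem_image.mp hy
      exact hb _ (image_mem_dowkerE ha (hS.2.1 hC)) (a T) (mem_image_of_mem a (hTC C hC))
    · exact ha T hT y hy
  · exact simplexSet_mono (singleton_subset_iff.mpr (mem_union_left _ (mem_image_of_mem _ hC)))
      (single_mem_simplexSet _)
  · have hCF := hS.2.1 hC
    exact simplexSet_mono ((chainMin_subset (hTC C hC)).trans subset_union_right)
      (barycenter_mem_simplexSet (hCF.2.1 (chainMin_mem hCF)).1)

theorem dowkerMap_swap_comp_homotopic_id {b : Finset X → Y} (ha : IsDowkerWitness R a)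
    (hb : IsDowkerWitness (Prod.swap ⁻¹' R) b) :
    ((dowkerMap (Prod.swap ⁻¹' R) b hb).comp (dowkerMap R a ha)).Homotopic
      (ContinuousMap.id _) :=
  sdMap_comp_sdMap_homotopic_id (isSimplicialComplex_dowkerF R) (isSimplicialComplex_dowkerE R)
    (contiguous_witness_chainMin ha hb)

lemma inclusionMap_comp_dowkerMap {R' : Set (X × Y)} (hRR' : R ⊆ R') {a' : Finset Y → X}
    (ha : IsDowkerWitness R a) (ha' : IsDowkerWitness R' a')
    (haa' : ∀ τ ∈ dowkerF R, a' τ = a τ) :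
    (inclusionMap (dowkerE_mono hRR')).comp (dowkerMap R a ha) =
      (dowkerMap R' a' ha').comp (inclusionMap (dowkerF_mono hRR')) :=
  inclusionMap_comp_sdMap _ _ _ _ _ _ haa'

/-- `dowkerE R` is definitionally `dowkerF (Prod.swap ⁻¹' R)`, so the Dowker map of the
transposed relation goes back from `|E_R|` to `|F_R|`. -/
noncomputable def dowkerHomotopyEquiv {b : Finset X → Y} (ha : IsDowkerWitness R a)
    (hb : IsDowkerWitness (Prod.swap ⁻¹' R) b) :
    ContinuousMap.HomotopyEquiv (Realization (dowkerF R)) (Realization (dowkerE R)) where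
  toFun := dowkerMap R a ha
  invFun := dowkerMap (Prod.swap ⁻¹' R) b hb
  left_inv := dowkerMap_swap_comp_homotopic_id ha hb
  right_inv := dowkerMap_swap_comp_homotopic_id (R := Prod.swap ⁻¹' R) hb ha

end Dowker

/-- **The Functorial Dowker Theorem.** For nested nonempty relations `R ⊆ R' ⊆ X × Y`,
there are homotopy equivalences `Γ : |F_R| → |E_R|` and `Γ' : |F_{R'}| → |E_{R'}|`
commuting, up to homotopy, with the canonical inclusions. -/
theorem functorial_dowker_theorem {X Y : Type*} (R R' : Set (X × Y))
    (hRR' : R ⊆ R') (hR : R.Nonempty) :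
    ∃ (Γ : ContinuousMap.HomotopyEquiv (Realization (dowkerF R)) (Realization (dowkerE R)))
      (Γ' : ContinuousMap.HomotopyEquiv (Realization (dowkerF R')) (Realization (dowkerE R'))),
      ((inclusionMap (dowkerE_mono hRR')).comp Γ.toFun).Homotopic
        (Γ'.toFun.comp (inclusionMap (dowkerF_mono hRR'))) := by
  classical
  obtain ⟨⟨x₀, y₀⟩, -⟩ := hR
  have ha := isDowkerWitness_dowkerWitness R fun _ => x₀
  have ha' := isDowkerWitness_dowkerWitness_of_subset hRR'
    (isDowkerWitness_dowkerWitness R' fun _ => x₀)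
  have hb := isDowkerWitness_dowkerWitness (Prod.swap ⁻¹' R) fun _ => y₀
  have hb' := isDowkerWitness_dowkerWitness (Prod.swap ⁻¹' R') fun _ => y₀
  refine ⟨dowkerHomotopyEquiv ha hb, dowkerHomotopyEquiv ha' hb', ?_⟩
  convert ContinuousMap.Homotopic.refl _ using 1
  exact (inclusionMap_comp_dowkerMap hRR' ha ha' fun τ hτ => dowkerWitness_eq_of_mem hτ _ _).symm
end

section
/- The network distance d_N, defined on finite networks (X, ω_X) by d_N(X,Y) = (1/2) min over correspondences R ∈ R(X,Y) of max over (x,y),(x',y') ∈ R of |ω_X(x,x') − ω_Y(y,y')|, satisfies the triangle inequality: d_N(X,Z) ≤ d_N(X,Y) + d_N(Y,Z) for all finite networks X, Y, Z. -/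
/-- A correspondence between `X` and `Y`: a relation whose projections to `X` and `Y` are
both surjective. -/
def IsCorrespondence {X Y : Type*} (R : Set (X × Y)) : Prop :=
  (∀ x : X, ∃ y : Y, (x, y) ∈ R) ∧ (∀ y : Y, ∃ x : X, (x, y) ∈ R)

/-- The distortion of a relation `R ⊆ X × Y` between two networks. -/
noncomputable def relDis {X Y : Type*} (ωX : X → X → ℝ) (ωY : Y → Y → ℝ)
    (R : Set (X × Y)) : ℝ :=
  sSup {d : ℝ | ∃ p ∈ R, ∃ q ∈ R, d = |ωX p.1 q.1 - ωY p.2 q.2|}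

lemma disSet_bddAbove {X Y : Type*} [Fintype X] [Fintype Y] (ωX : X → X → ℝ)
    (ωY : Y → Y → ℝ) (R : Set (X × Y)) :
    BddAbove {d : ℝ | ∃ p ∈ R, ∃ q ∈ R, d = |ωX p.1 q.1 - ωY p.2 q.2|} := by
  apply BddAbove.mono (s := _)
    (t := Set.range (fun pq : (X × Y) × (X × Y) => |ωX pq.1.1 pq.2.1 - ωY pq.1.2 pq.2.2|))
  · rintro d ⟨p, hp, q, hq, rfl⟩
    exact ⟨(p, q), rfl⟩
  · exact (Set.finite_range _).bddAbove

lemma relDis_nonneg {X Y : Type*} [Fintype X] [Fintype Y] (ωX : X → X → ℝ)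
    (ωY : Y → Y → ℝ) (R : Set (X × Y)) (hR : R.Nonempty) :
    0 ≤ relDis ωX ωY R := by
  obtain ⟨p, hp⟩ := hR
  calc (0:ℝ) ≤ |ωX p.1 p.1 - ωY p.2 p.2| := abs_nonneg _
    _ ≤ relDis ωX ωY R :=
      le_csSup (disSet_bddAbove ωX ωY R) ⟨p, hp, p, hp, rfl⟩

lemma le_relDis {X Y : Type*} [Fintype X] [Fintype Y] (ωX : X → X → ℝ)
    (ωY : Y → Y → ℝ) (R : Set (X × Y)) {p q : X × Y} (hp : p ∈ R) (hq : q ∈ R) :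
    |ωX p.1 q.1 - ωY p.2 q.2| ≤ relDis ωX ωY R :=
  le_csSup (disSet_bddAbove ωX ωY R) ⟨p, hp, q, hq, rfl⟩

/-- The network distance between two networks. -/
noncomputable def netDist {X Y : Type*} (ωX : X → X → ℝ) (ωY : Y → Y → ℝ) : ℝ :=
  (1 / 2) * sInf {d : ℝ | ∃ R : Set (X × Y), IsCorrespondence R ∧ d = relDis ωX ωY R}

/-- **The network distance satisfies the triangle inequality.** -/
theorem netDist_triangle {X Y Z : Type*} [Fintype X] [Fintype Y] [Fintype Z]
    [Nonempty X] [Nonempty Y] [Nonempty Z]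
    (ωX : X → X → ℝ) (ωY : Y → Y → ℝ) (ωZ : Z → Z → ℝ) :
    netDist ωX ωZ ≤ netDist ωX ωY + netDist ωY ωZ := by
  set A := {d : ℝ | ∃ R : Set (X × Y), IsCorrespondence R ∧ d = relDis ωX ωY R} with hA
  set B := {d : ℝ | ∃ R : Set (Y × Z), IsCorrespondence R ∧ d = relDis ωY ωZ R} with hB
  set C := {d : ℝ | ∃ R : Set (X × Z), IsCorrespondence R ∧ d = relDis ωX ωZ R} with hC
  have univA : IsCorrespondence (Set.univ : Set (X × Y)) :=
    ⟨fun _ => ⟨Classical.arbitrary _, trivial⟩, fun _ => ⟨Classical.arbitrary _, trivial⟩⟩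
  have univB : IsCorrespondence (Set.univ : Set (Y × Z)) :=
    ⟨fun _ => ⟨Classical.arbitrary _, trivial⟩, fun _ => ⟨Classical.arbitrary _, trivial⟩⟩
  have hAne : A.Nonempty := ⟨_, Set.univ, univA, rfl⟩
  have hBne : B.Nonempty := ⟨_, Set.univ, univB, rfl⟩
  have hCbdd : BddBelow C := by
    refine ⟨0, ?_⟩
    rintro d ⟨R, hR, rfl⟩
    obtain ⟨x⟩ := ‹Nonempty X›
    obtain ⟨z, hz⟩ := hR.1 x
    exact relDis_nonneg _ _ _ ⟨_, hz⟩
  -- key step: for correspondences R, S, the composition bounds things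
  have key : ∀ a ∈ A, ∀ b ∈ B, sInf C ≤ a + b := by
    rintro a ⟨R, hR, rfl⟩ b ⟨S, hS, rfl⟩
    set T : Set (X × Z) := {p | ∃ y : Y, (p.1, y) ∈ R ∧ (y, p.2) ∈ S} with hT
    have hTcorr : IsCorrespondence T := by
      constructor
      · intro x
        obtain ⟨y, hy⟩ := hR.1 x
        obtain ⟨z, hz⟩ := hS.1 y
        exact ⟨z, y, hy, hz⟩
      · intro z
        obtain ⟨y, hy⟩ := hS.2 z
        obtain ⟨x, hx⟩ := hR.2 y
        exact ⟨x, y, hx, hy⟩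
    have hRne : R.Nonempty := by
      obtain ⟨x⟩ := ‹Nonempty X›; obtain ⟨y, hy⟩ := hR.1 x; exact ⟨_, hy⟩
    have hSne : S.Nonempty := by
      obtain ⟨y⟩ := ‹Nonempty Y›; obtain ⟨z, hz⟩ := hS.1 y; exact ⟨_, hz⟩
    have hTle : relDis ωX ωZ T ≤ relDis ωX ωY R + relDis ωY ωZ S := by
      apply Real.sSup_le
      · rintro d ⟨p, ⟨y, hy1, hy2⟩, q, ⟨y', hy'1, hy'2⟩, rfl⟩
        calc |ωX p.1 q.1 - ωZ p.2 q.2|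
            ≤ |ωX p.1 q.1 - ωY y y'| + |ωY y y' - ωZ p.2 q.2| := abs_sub_le _ _ _
          _ ≤ relDis ωX ωY R + relDis ωY ωZ S := by
              gcongr
              · exact le_relDis ωX ωY R hy1 hy'1
              · exact le_relDis ωY ωZ S hy2 hy'2
      · exact add_nonneg (relDis_nonneg _ _ _ hRne) (relDis_nonneg _ _ _ hSne)
    calc sInf C ≤ relDis ωX ωZ T := csInf_le hCbdd ⟨T, hTcorr, rfl⟩
      _ ≤ _ := hTle
  have main : sInf C ≤ sInf A + sInf B := by
    have h1 : sInf C - sInf B ≤ sInf A := by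
      apply le_csInf hAne
      intro a ha
      have h2 : sInf C - a ≤ sInf B := by
        apply le_csInf hBne
        intro b hb
        linarith [key a ha b hb]
      linarith
    linarith
  unfold netDist
  linarith
end

section
/- Let (X, ω_X) and (Y, ω_Y) be finite networks with maps φ : X → Y and ψ : Y → X, and let η ≥ 0 satisfy max(dis(φ), dis(ψ), C_{X,Y}(φ,ψ), C_{Y,X}(ψ,φ)) ≤ η. Then for every δ ∈ ℝ: (a) φ induces a simplicial map from the Dowker sink complex D^si_{δ,X} to D^si_{δ+η,Y}; and (b) the composite ψ_{δ+η} ∘ φ_δ : D^si_{δ,X} → D^si_{δ+2η,X} is contiguous to the inclusion D^si_{δ,X} ↪ D^si_{δ+2η,X}. -/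
/-- The Dowker sink complex of a network `(X, ω)` at resolution `δ`. -/
def dowkerSink {X : Type*} (ω : X → X → ℝ) (δ : ℝ) : Set (Finset X) :=
  {σ | σ.Nonempty ∧ ∃ x' : X, ∀ x ∈ σ, ω x x' ≤ δ}

/-- The distortion of a map between two networks. -/
noncomputable def mapDis {X Y : Type*} (ωX : X → X → ℝ) (ωY : Y → Y → ℝ) (φ : X → Y) : ℝ :=
  ⨆ p : X × X, |ωX p.1 p.2 - ωY (φ p.1) (φ p.2)|

/-- The codistortion `C_{X,Y}(φ,ψ)` of a pair of maps between two networks. -/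
noncomputable def codis {X Y : Type*} (ωX : X → X → ℝ) (ωY : Y → Y → ℝ)
    (φ : X → Y) (ψ : Y → X) : ℝ :=
  ⨆ p : X × Y, |ωX p.1 (ψ p.2) - ωY (φ p.1) p.2|

lemma mapDis_le {X Y : Type*} [Fintype X] [Fintype Y] (ωX : X → X → ℝ) (ωY : Y → Y → ℝ)
    (φ : X → Y) (x x' : X) : |ωX x x' - ωY (φ x) (φ x')| ≤ mapDis ωX ωY φ := by
  unfold mapDis
  exact le_ciSup (f := fun p : X × X => |ωX p.1 p.2 - ωY (φ p.1) (φ p.2)|)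
    (Set.Finite.bddAbove (Set.finite_range _)) (x, x')

lemma codis_le {X Y : Type*} [Fintype X] [Fintype Y] (ωX : X → X → ℝ) (ωY : Y → Y → ℝ)
    (φ : X → Y) (ψ : Y → X) (x : X) (y : Y) :
    |ωX x (ψ y) - ωY (φ x) y| ≤ codis ωX ωY φ ψ := by
  unfold codis
  exact le_ciSup (f := fun p : X × Y => |ωX p.1 (ψ p.2) - ωY (φ p.1) p.2|)
    (Set.Finite.bddAbove (Set.finite_range _)) (x, y)

/-- **Stability maps for the Dowker sink filtration.** If the distortions and codistortions
of a pair of maps `φ, ψ` are bounded by `η`, then (a) `φ` induces a simplicial map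
`D^si_{δ,X} → D^si_{δ+η,Y}`, and (b) the composite `ψ ∘ φ` is contiguous to the inclusion
`D^si_{δ,X} ↪ D^si_{δ+2η,X}`. -/
theorem dowker_stability_maps {X Y : Type*} [Fintype X] [Fintype Y] [Nonempty X] [Nonempty Y]
    [DecidableEq X] [DecidableEq Y]
    (ωX : X → X → ℝ) (ωY : Y → Y → ℝ) (φ : X → Y) (ψ : Y → X) (η : ℝ) (hη : 0 ≤ η)
    (h : max (max (mapDis ωX ωY φ) (mapDis ωY ωX ψ))
          (max (codis ωX ωY φ ψ) (codis ωY ωX ψ φ)) ≤ η) :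
    ∀ δ : ℝ,
      (∀ σ ∈ dowkerSink ωX δ, σ.image φ ∈ dowkerSink ωY (δ + η)) ∧
      (∀ σ ∈ dowkerSink ωX δ, σ.image (ψ ∘ φ) ∪ σ ∈ dowkerSink ωX (δ + 2 * η)) := by
  have hdφ : mapDis ωX ωY φ ≤ η := le_trans (le_trans (le_max_left _ _) (le_max_left _ _)) h
  have hcYX : codis ωY ωX ψ φ ≤ η := le_trans (le_trans (le_max_right _ _) (le_max_right _ _)) h
  intro δ
  constructor
  · rintro σ ⟨hne, x', hx'⟩
    refine ⟨hne.image φ, φ x', ?_⟩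
    intro y hy
    obtain ⟨x, hx, rfl⟩ := Finset.mem_image.mp hy
    have h1 := (abs_le.mp (le_trans (mapDis_le ωX ωY φ x x') hdφ)).1
    have := hx' x hx
    linarith
  · rintro σ ⟨hne, x', hx'⟩
    refine ⟨Finset.Nonempty.mono Finset.subset_union_right hne, x', ?_⟩
    intro x hx
    rcases Finset.mem_union.mp hx with hx | hx
    · obtain ⟨z, hz, rfl⟩ := Finset.mem_image.mp hx
      have h1 := (abs_le.mp (le_trans (mapDis_le ωX ωY φ z x') hdφ)).1
      have h2 := (abs_le.mp (le_trans (codis_le ωY ωX ψ φ (φ z) x') hcYX)).1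
      have := hx' z hz
      simp only [Function.comp_apply]
      linarith
    · have := hx' x hx
      linarith
end
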